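/- Let R be a local ring. A 2×2 matrix A over R is a non-trivial strongly clean element of M₂(R) if and only if A is similar to a diagonal matrix diag(t₀, t₁) with 1 - t₀ ∈ J(R) and t₁ ∈ J(R). -/

import Mathlib

/-- An element of a ring is strongly clean if it is the sum of an idempotent and a unit
that commute with each other. -/
def IsStronglyClean {S : Type*} [Ring S] (a : S) : Prop :=
  ∃ e u : S, IsIdempotentElem e ∧ IsUnit u ∧ a = e + u ∧ e * u = u * e

/-!
For idempotents `e, f` of any ring, `p = (1 - e)(1 - f) + ef` satisfies `p f = e p`, and both
`p q` and `q p` equal `1 - (e - f)²` for `q = (1 - f)(1 - e) + fe`; so `e` and `f` are conjugate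
as soon as `1 - (e - f)²` is a unit. For an idempotent `E = !![a, b; c, d]` of `M₂(R)`,
`(E - diag(0, 1))² = diag(a, 1 - d)` and `(E - diag(1, 0))² = diag(1 - a, d)`. Over a local
ring `1 - (E - f)²` is a unit for one of these `f` once `E ≠ 0, 1`: otherwise `E` or `1 - E` is
an idempotent with nonunit diagonal, whose complement is then invertible, so it vanishes.
Conjugating a strongly clean decomposition `A = E + U` so that `E = diag(0, 1)` makes `U`
diagonal, since it commutes with `E`, and non-triviality is read off the diagonal entries.
-/

open Matrix

namespace IsLocalRing

variable {R : Type*} [Ring R] [IsLocalRing R]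

theorem isUnit_or_isUnit_one_sub (a : R) : IsUnit a ∨ IsUnit (1 - a) :=
  isUnit_or_isUnit_of_add_one (add_sub_cancel a 1)

instance toIsDedekindFiniteMonoid : IsDedekindFiniteMonoid R where
  mul_eq_one_symm {x y} hxy := by
    have he : IsIdempotentElem (y * x) := by
      rw [IsIdempotentElem, mul_assoc, ← mul_assoc x, hxy, one_mul]
    refine (isUnit_or_isUnit_one_sub (y * x)).elim
      (fun h ↦ (IsIdempotentElem.iff_eq_one_of_isUnit h).1 he) fun h ↦ ?_
    have hyx : y * x = 0 := h.mul_left_eq_zero.1 he.mul_one_sub_self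
    have h10 : (1 : R) = 0 :=
      calc (1 : R) = x * (y * x) * y := by rw [← mul_assoc, hxy, one_mul, hxy]
        _ = 0 := by rw [hyx, mul_zero, zero_mul]
    exact absurd h10 one_ne_zero

end IsLocalRing

namespace IsIdempotentElem

variable {S : Type*} [Ring S] {e f : S}

theorem one_sub_mul_one_sub_add_mul_mul (he : IsIdempotentElem e) (hf : IsIdempotentElem f) :
    ((1 - e) * (1 - f) + e * f) * ((1 - f) * (1 - e) + f * e) = 1 - (e - f) ^ 2 := by
  have hf' (x : S) : x * f * f = x * f := by rw [mul_assoc, hf.eq]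
  simp only [sq, mul_add, add_mul, mul_sub, sub_mul, mul_one, one_mul, ← mul_assoc, he.eq, hf.eq,
    hf']
  abel

theorem semiconjBy_one_sub_mul_one_sub_add_mul (he : IsIdempotentElem e) (hf : IsIdempotentElem f) :
    SemiconjBy ((1 - e) * (1 - f) + e * f) f e := by
  rw [SemiconjBy, add_mul, mul_add, mul_assoc, mul_assoc, hf.one_sub_mul_self, hf.eq,
    ← mul_assoc, ← mul_assoc, he.mul_one_sub_self, he.eq]
  simp

theorem exists_eq_conj_of_isUnit_one_sub_sq (he : IsIdempotentElem e) (hf : IsIdempotentElem f)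
    (h : IsUnit (1 - (e - f) ^ 2)) : ∃ P : Sˣ, e = P * f * ↑P⁻¹ := by
  set p := (1 - e) * (1 - f) + e * f
  set q := (1 - f) * (1 - e) + f * e
  obtain ⟨w, hw⟩ := h
  have hpq : p * q = w := by rw [hw, one_sub_mul_one_sub_add_mul_mul he hf]
  have hqp : q * p = w := by
    rw [hw, one_sub_mul_one_sub_add_mul_mul hf he, ← neg_sub e f, neg_sq]
  have hp : IsUnit p := isUnit_iff_exists_and_exists.2
    ⟨⟨q * ↑w⁻¹, by rw [← mul_assoc, hpq, w.mul_inv]⟩, ⟨↑w⁻¹ * q, by rw [mul_assoc, hqp, w.inv_mul]⟩⟩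
  refine ⟨hp.unit, ?_⟩
  rw [Units.eq_mul_inv_iff_mul_eq, IsUnit.unit_spec]
  exact (semiconjBy_one_sub_mul_one_sub_add_mul he hf).symm

end IsIdempotentElem

def Units.conjRingEquiv {S : Type*} [Ring S] (P : Sˣ) : S ≃+* S :=
  MulSemiringAction.toRingEquiv (ConjAct Sˣ) S (ConjAct.toConjAct P)

theorem Units.conjRingEquiv_apply {S : Type*} [Ring S] (P : Sˣ) (x : S) :
    P.conjRingEquiv x = P * x * ↑P⁻¹ := by
  simp [Units.conjRingEquiv, ConjAct.units_smul_def]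

def IsNontrivialStronglyClean {S : Type*} [Ring S] (a : S) : Prop :=
  IsStronglyClean a ∧ ¬IsUnit a ∧ ¬IsUnit (1 - a)

section StronglyClean

variable {S T : Type*} [Ring S] [Ring T]

theorem IsStronglyClean.map {F : Type*} [FunLike F S T] [RingHomClass F S T] (f : F) {a : S}
    (h : IsStronglyClean a) : IsStronglyClean (f a) := by
  obtain ⟨e, u, he, hu, rfl, heu⟩ := h
  exact ⟨f e, f u, he.map f, hu.map f, map_add f e u, by rw [← map_mul, heu, map_mul]⟩

theorem IsNontrivialStronglyClean.map (σ : S ≃+* T) {a : S} (h : IsNontrivialStronglyClean a) :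
    IsNontrivialStronglyClean (σ a) := by
  obtain ⟨hsc, ha, ha'⟩ := h
  refine ⟨hsc.map σ, by rwa [MulEquiv.isUnit_map σ], ?_⟩
  rwa [← map_one σ, ← map_sub, MulEquiv.isUnit_map σ]

theorem isNontrivialStronglyClean_conj_iff (P : Sˣ) {a : S} :
    IsNontrivialStronglyClean (P * a * ↑P⁻¹) ↔ IsNontrivialStronglyClean a := by
  rw [← Units.conjRingEquiv_apply]
  refine ⟨fun h ↦ ?_, fun h ↦ h.map _⟩
  simpa only [RingEquiv.symm_apply_apply] using h.map P.conjRingEquiv.symm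

end StronglyClean

namespace Matrix

section Ring

variable {R : Type*} [Ring R]

theorem isIdempotentElem_fin_two_iff {a b c d : R} :
    IsIdempotentElem !![a, b; c, d] ↔
      a * a + b * c = a ∧ a * b + b * d = b ∧ c * a + d * c = c ∧ c * b + d * d = d := by
  simp [IsIdempotentElem, and_assoc]

theorem one_sub_fin_two (a b c d : R) : 1 - !![a, b; c, d] = !![1 - a, -b; -c, 1 - d] := by
  simp [one_fin_two]

theorem isUnit_upperTriangular_fin_two {a d : R} (b : R) (ha : IsUnit a) (hd : IsUnit d) :
    IsUnit !![a, b; 0, d] := by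
  obtain ⟨u, rfl⟩ := ha
  obtain ⟨v, rfl⟩ := hd
  refine ⟨⟨!![↑u, b; 0, ↑v], !![↑u⁻¹, -(↑u⁻¹ * b * ↑v⁻¹); 0, ↑v⁻¹], ?_, ?_⟩, rfl⟩ <;>
    simp [one_fin_two, mul_assoc]

theorem isUnit_lowerUnitriangular_fin_two (c : R) : IsUnit !![1, 0; c, 1] :=
  ⟨⟨!![1, 0; c, 1], !![1, 0; -c, 1], by simp [one_fin_two], by simp [one_fin_two]⟩, rfl⟩

theorem isUnit_fin_two_of_isUnit_schur (u : Rˣ) {b c d : R} (hs : IsUnit (d - c * ↑u⁻¹ * b)) :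
    IsUnit !![↑u, b; c, d] := by
  have hLU : !![↑u, b; c, d] = !![1, 0; c * ↑u⁻¹, 1] * !![↑u, b; 0, d - c * ↑u⁻¹ * b] := by
    simp [mul_assoc]
  rw [hLU]
  exact (isUnit_lowerUnitriangular_fin_two _).mul (isUnit_upperTriangular_fin_two _ u.isUnit hs)

theorem isUnit_diag_fin_two_iff {a d : R} : IsUnit !![a, 0; 0, d] ↔ IsUnit a ∧ IsUnit d := by
  refine ⟨fun ⟨⟨_, N, hN, hN'⟩, hD⟩ ↦ ?_, fun h ↦ isUnit_upperTriangular_fin_two 0 h.1 h.2⟩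
  subst hD
  rw [eta_fin_two N] at hN hN'
  simp [one_fin_two] at hN hN'
  obtain ⟨⟨ha, -⟩, -, hd⟩ := hN
  obtain ⟨⟨ha', -⟩, -, hd'⟩ := hN'
  exact ⟨⟨⟨a, N 0 0, ha, ha'⟩, rfl⟩, ⟨d, N 1 1, hd, hd'⟩, rfl⟩

theorem sq_sub_diag_zero_one_of_isIdempotentElem {a b c d : R}
    (hE : IsIdempotentElem !![a, b; c, d]) :
    (!![a, b; c, d] - !![0, 0; 0, 1]) ^ 2 = !![a, 0; 0, 1 - d] := by
  obtain ⟨h₁, h₂, h₃, h₄⟩ := isIdempotentElem_fin_two_iff.1 hE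
  have h₂' : a * b + b * (d - 1) = 0 := by linear_combination (norm := noncomm_ring) h₂
  have h₃' : c * a + (d - 1) * c = 0 := by linear_combination (norm := noncomm_ring) h₃
  have h₄' : c * b + (d - 1) * (d - 1) = 1 - d := by linear_combination (norm := noncomm_ring) h₄
  simp [sq, h₁, h₂', h₃', h₄']

theorem sq_sub_diag_one_zero_of_isIdempotentElem {a b c d : R}
    (hE : IsIdempotentElem !![a, b; c, d]) :
    (!![a, b; c, d] - !![1, 0; 0, 0]) ^ 2 = !![1 - a, 0; 0, d] := by
  obtain ⟨h₁, h₂, h₃, h₄⟩ := isIdempotentElem_fin_two_iff.1 hE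
  have h₁' : (a - 1) * (a - 1) + b * c = 1 - a := by linear_combination (norm := noncomm_ring) h₁
  have h₂' : (a - 1) * b + b * d = 0 := by linear_combination (norm := noncomm_ring) h₂
  have h₃' : c * (a - 1) + d * c = 0 := by linear_combination (norm := noncomm_ring) h₃
  simp [sq, h₁', h₂', h₃', h₄]

end Ring

section LocalRing

variable {R : Type*} [Ring R] [IsLocalRing R]

theorem isUnit_one_sub_fin_two_of_not_isUnit {a b c d : R} (ha : ¬IsUnit a) (hb : ¬IsUnit b)
    (hd : ¬IsUnit d) : IsUnit (1 - !![a, b; c, d]) := by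
  obtain ⟨u, hu⟩ := (IsLocalRing.isUnit_or_isUnit_one_sub a).resolve_left ha
  have hn : ¬IsUnit (d + c * ↑u⁻¹ * b) :=
    IsLocalRing.nonunits_add hd fun h ↦ hb (IsUnit.mul_iff.1 h).2
  rw [one_sub_fin_two, ← hu]
  refine isUnit_fin_two_of_isUnit_schur u ?_
  rw [show 1 - d - -c * ↑u⁻¹ * -b = 1 - (d + c * ↑u⁻¹ * b) by noncomm_ring]
  exact (IsLocalRing.isUnit_or_isUnit_one_sub _).resolve_left hn

theorem eq_zero_of_isIdempotentElem_fin_two {a b c d : R} (hE : IsIdempotentElem !![a, b; c, d])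
    (ha : ¬IsUnit a) (hd : ¬IsUnit d) : !![a, b; c, d] = 0 := by
  have hb : ¬IsUnit b := by
    intro hb
    obtain ⟨-, h₂, -, -⟩ := isIdempotentElem_fin_two_iff.1 hE
    have hbd : b * d = (1 - a) * b := by linear_combination (norm := noncomm_ring) h₂
    have h1a := (IsLocalRing.isUnit_or_isUnit_one_sub a).resolve_left ha
    exact hd (IsUnit.mul_iff.1 (hbd ▸ h1a.mul hb)).2
  exact (isUnit_one_sub_fin_two_of_not_isUnit ha hb hd).mul_left_eq_zero.1 hE.mul_one_sub_self

theorem exists_eq_conj_diag_of_isIdempotentElem {E : Matrix (Fin 2) (Fin 2) R}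
    (hE : IsIdempotentElem E) (h0 : E ≠ 0) (h1 : E ≠ 1) :
    ∃ P : (Matrix (Fin 2) (Fin 2) R)ˣ, E = P.val * !![0, 0; 0, 1] * P⁻¹.val := by
  obtain ⟨a, b, c, d, rfl⟩ : ∃ a b c d, E = !![a, b; c, d] := ⟨_, _, _, _, eta_fin_two E⟩
  by_cases h₀₁ : IsUnit (1 - a) ∧ IsUnit d
  · refine hE.exists_eq_conj_of_isUnit_one_sub_sq (isIdempotentElem_fin_two_iff.2 (by simp)) ?_
    rwa [sq_sub_diag_zero_one_of_isIdempotentElem hE, one_sub_fin_two, neg_zero, sub_sub_cancel,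
      isUnit_diag_fin_two_iff]
  by_cases h₁₀ : IsUnit a ∧ IsUnit (1 - d)
  · obtain ⟨P, hP⟩ := hE.exists_eq_conj_of_isUnit_one_sub_sq (f := !![1, 0; 0, 0])
      (isIdempotentElem_fin_two_iff.2 (by simp)) (by
        rwa [sq_sub_diag_one_zero_of_isIdempotentElem hE, one_sub_fin_two, neg_zero,
          sub_sub_cancel, isUnit_diag_fin_two_iff])
    let S : (Matrix (Fin 2) (Fin 2) R)ˣ :=
      ⟨!![0, 1; 1, 0], !![0, 1; 1, 0], by simp [one_fin_two], by simp [one_fin_two]⟩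
    have hS : !![1, 0; 0, 0] = S.val * !![0, 0; 0, 1] * S⁻¹.val := by simp [S]
    refine ⟨P * S, ?_⟩
    rw [hP, hS]
    simp [mul_assoc]
  exfalso
  rcases not_and_or.1 h₀₁ with h | h <;> rcases not_and_or.1 h₁₀ with h' | h'
  · exact (IsLocalRing.isUnit_or_isUnit_one_sub a).elim h' h
  · have h1E := eq_zero_of_isIdempotentElem_fin_two (one_sub_fin_two a b c d ▸ hE.one_sub) h h'
    exact h1 (sub_eq_zero.1 (one_sub_fin_two a b c d ▸ h1E)).symm
  · exact h0 (eq_zero_of_isIdempotentElem_fin_two hE h' h)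
  · exact (IsLocalRing.isUnit_or_isUnit_one_sub d).elim h h'

theorem isNontrivialStronglyClean_diag {t₀ t₁ : R} (h₀ : ¬IsUnit (1 - t₀)) (h₁ : ¬IsUnit t₁) :
    IsNontrivialStronglyClean !![t₀, 0; 0, t₁] := by
  have ht₀ : IsUnit t₀ := by
    simpa using (IsLocalRing.isUnit_or_isUnit_one_sub (1 - t₀)).resolve_left h₀
  have ht₁ : IsUnit (t₁ - 1) := by
    simpa using ((IsLocalRing.isUnit_or_isUnit_one_sub t₁).resolve_left h₁).neg
  refine ⟨⟨!![0, 0; 0, 1], !![t₀, 0; 0, t₁ - 1], isIdempotentElem_fin_two_iff.2 (by simp),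
    isUnit_diag_fin_two_iff.2 ⟨ht₀, ht₁⟩, by simp, by rw [mul_fin_two, mul_fin_two]; simp⟩,
    fun h ↦ h₁ ?_, fun h ↦ h₀ ?_⟩
  · exact (isUnit_diag_fin_two_iff.1 h).2
  · rw [one_sub_fin_two, neg_zero, isUnit_diag_fin_two_iff] at h
    exact h.1

theorem exists_eq_conj_diag_of_isNontrivialStronglyClean {A : Matrix (Fin 2) (Fin 2) R}
    (hA : IsNontrivialStronglyClean A) :
    ∃ (t₀ t₁ : R) (P : (Matrix (Fin 2) (Fin 2) R)ˣ), IsUnit t₀ ∧ IsUnit (t₁ - 1) ∧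
      A = P.val * !![t₀, 0; 0, t₁] * P⁻¹.val := by
  obtain ⟨⟨E, U, hE, hU, rfl, hEU⟩, hA, hA'⟩ := hA
  have h0 : E ≠ 0 := by
    rintro rfl
    exact hA (by simpa using hU)
  have h1 : E ≠ 1 := by
    rintro rfl
    exact hA' (by simpa using hU.neg)
  obtain ⟨P, hP⟩ := exists_eq_conj_diag_of_isIdempotentElem hE h0 h1
  set σ := P.conjRingEquiv
  have hE' : σ.symm E = !![0, 0; 0, 1] := by
    rw [hP, ← Units.conjRingEquiv_apply, σ.symm_apply_apply]
  obtain ⟨p, q, r, s, hV⟩ : ∃ p q r s, σ.symm U = !![p, q; r, s] := ⟨_, _, _, _, eta_fin_two _⟩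
  have hc : Commute !![0, 0; 0, 1] !![p, q; r, s] := hE' ▸ hV ▸ Commute.map hEU σ.symm
  obtain ⟨rfl, rfl⟩ : q = 0 ∧ r = 0 := by
    simpa [Commute, SemiconjBy, eq_comm] using hc
  have hps := isUnit_diag_fin_two_iff.1 (hV ▸ hU.map σ.symm)
  refine ⟨p, 1 + s, P, hps.1, by simpa using hps.2, ?_⟩
  calc E + U = σ (!![0, 0; 0, 1] + σ.symm U) := by
        rw [map_add, σ.apply_symm_apply, hP, Units.conjRingEquiv_apply]
    _ = P.val * !![p, 0; 0, 1 + s] * P⁻¹.val := by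
        rw [hV, Units.conjRingEquiv_apply]
        simp [add_comm]

end LocalRing

end Matrix

/-- Over a local ring `R` (where `x ∈ J(R)` iff `x` is a nonunit), `A ∈ M₂(R)` is a
non-trivial strongly clean matrix iff `A` is similar to `diag(t₀, t₁)` with
`1 - t₀ ∈ J(R)` and `t₁ ∈ J(R)`. -/
theorem nontrivial_stronglyClean_matrix_two_iff {R : Type*} [Ring R] [IsLocalRing R]
    (A : Matrix (Fin 2) (Fin 2) R) :
    (IsStronglyClean A ∧ ¬ IsUnit A ∧ ¬ IsUnit (1 - A)) ↔
      ∃ (t₀ t₁ : R) (P : (Matrix (Fin 2) (Fin 2) R)ˣ),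
        ¬ IsUnit (1 - t₀) ∧ ¬ IsUnit t₁ ∧
        A = P.val * !![t₀, 0; 0, t₁] *
              (P⁻¹ : (Matrix (Fin 2) (Fin 2) R)ˣ).val := by
  change IsNontrivialStronglyClean A ↔ _
  constructor
  · intro hA
    obtain ⟨t₀, t₁, P, ht₀, ht₁, rfl⟩ := exists_eq_conj_diag_of_isNontrivialStronglyClean hA
    obtain ⟨-, hT, hT'⟩ := (isNontrivialStronglyClean_conj_iff P).1 hA
    refine ⟨t₀, t₁, P, fun h ↦ hT' ?_, fun h ↦ hT (isUnit_diag_fin_two_iff.2 ⟨ht₀, h⟩), rfl⟩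
    rw [one_sub_fin_two, neg_zero, isUnit_diag_fin_two_iff]
    exact ⟨h, by simpa using ht₁.neg⟩
  · rintro ⟨t₀, t₁, P, h₀, h₁, rfl⟩
    exact (isNontrivialStronglyClean_conj_iff P).2 (isNontrivialStronglyClean_diag h₀ h₁)
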